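/- arXiv:1305.5795 — 2 statements merged into one kernel-verified Lean document; each statement's English description precedes it below -/
import Mathlib

section
/- Let Δ be the broken circuit complex of an ordered matroid (M,<) with dim Δ ≥ 1. If F is a face of Δ such that link_Δ F is an n-gon (an n-cycle graph, viewed as a 1-dimensional simplicial complex), then n ≤ 4. -/
open Set Polynomial Matroid CategoryTheory

universe u

namespace PaperBC

variable {α : Type*}

/-- A circuit of a matroid: a minimal dependent subset of the ground set. -/
def MCircuit (M : Matroid α) (C : Set α) : Prop :=
  ¬ M.Indep C ∧ C ⊆ M.E ∧ ∀ D, D ⊂ C → M.Indep D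

/-- A broken circuit with respect to an order relation `r` (to be read as `≤`):
a circuit with its least element removed. -/
def BrokenCircuit (r : α → α → Prop) (M : Matroid α) (B : Set α) : Prop :=
  ∃ C e, MCircuit M C ∧ e ∈ C ∧ (∀ x ∈ C, r e x) ∧ B = C \ {e}

/-- The broken circuit complex: subsets of the ground set containing no broken circuit. -/
def BCC (r : α → α → Prop) (M : Matroid α) : Set (Set α) :=
  {F | F ⊆ M.E ∧ ∀ B, BrokenCircuit r M B → ¬ B ⊆ F}

/-- The independence (matroid) complex. -/
def IndepComplex (M : Matroid α) : Set (Set α) := {F | M.Indep F}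

/-- The link of a face in a complex. -/
def linkOf (Δ : Set (Set α)) (F : Set α) : Set (Set α) :=
  {G | F ∪ G ∈ Δ ∧ Disjoint F G}

/-- Vertex set of a complex. -/
def vertexSet (Δ : Set (Set α)) : Set α := {v | {v} ∈ Δ}

def dimLE (Δ : Set (Set α)) (d : ℕ) : Prop := ∀ s ∈ Δ, s.ncard ≤ d + 1

def dimEq (Δ : Set (Set α)) (d : ℕ) : Prop := dimLE Δ d ∧ ∃ s ∈ Δ, s.ncard = d + 1

/-- `Δ` is an `n`-gon (cycle) as a 1-dimensional complex. -/
def IsNGon (Δ : Set (Set α)) (n : ℕ) : Prop :=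
  3 ≤ n ∧ ∃ v : ℕ → α, (∀ i j, i < n → j < n → v i = v j → i = j) ∧
    Δ = {s | s = ∅ ∨ (∃ i < n, s = {v i}) ∨ ∃ i < n, s = {v i, v ((i + 1) % n)}}

/-- `Δ` is a path on `m` vertices as a simplicial complex. -/
def IsPathComplex (Δ : Set (Set α)) (m : ℕ) : Prop :=
  1 ≤ m ∧ ∃ v : ℕ → α, (∀ i j, i < m → j < m → v i = v j → i = j) ∧
    Δ = {s | s = ∅ ∨ (∃ i < m, s = {v i}) ∨ ∃ i, i + 1 < m ∧ s = {v i, v (i + 1)}}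

/-- The h-polynomial `h(t) = f(t-1)` of a complex with prescribed rank `r`,
where `f(t) = ∑ fᵢ t^{r-i}`. -/
noncomputable def hPoly (Δ : Set (Set α)) (r : ℕ) : Polynomial ℤ :=
  ∑ i ∈ Finset.range (r + 1),
    Polynomial.C (({s ∈ Δ | s.ncard = i}.ncard : ℤ)) * (X - 1) ^ (r - i)

/-- The `i`-th entry of the h-vector: the coefficient of `t^{r-i}` in the h-polynomial. -/
noncomputable def hVec (Δ : Set (Set α)) (r i : ℕ) : ℤ := (hPoly Δ r).coeff (r - i)

/-- The rank of a matroid, as the cardinality of some base. -/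
noncomputable def rk (M : Matroid α) : ℕ := M.exists_isBase.choose.ncard

/-- A simple matroid: every circuit has at least 3 elements. -/
def MSimple (M : Matroid α) : Prop := ∀ C, MCircuit M C → 3 ≤ C.ncard

/-- A connected matroid: any two distinct elements lie on a common circuit. -/
def MConnected (M : Matroid α) : Prop :=
  M.E.Nonempty ∧ ∀ e ∈ M.E, ∀ f ∈ M.E, e ≠ f → ∃ C, MCircuit M C ∧ e ∈ C ∧ f ∈ C

def MLoop (M : Matroid α) (e : α) : Prop := e ∈ M.E ∧ ¬ M.Indep {e}

def MColoop (M : Matroid α) (e : α) : Prop := e ∈ M.E ∧ ∀ B, M.IsBase B → e ∈ B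

/-- `M` is the parallel connection of `M₁` and `M₂` relative to `e`,
characterized by its set of circuits. -/
def IsParallelConn (M M₁ M₂ : Matroid α) (e : α) : Prop :=
  M₁.E ∩ M₂.E = {e} ∧ M.E = M₁.E ∪ M₂.E ∧
  ¬ MLoop M₁ e ∧ ¬ MColoop M₁ e ∧ ¬ MLoop M₂ e ∧ ¬ MColoop M₂ e ∧
  ∀ C, MCircuit M C ↔ (MCircuit M₁ C ∨ MCircuit M₂ C ∨
    ∃ C₁ C₂, MCircuit M₁ C₁ ∧ MCircuit M₂ C₂ ∧ e ∈ C₁ ∧ e ∈ C₂ ∧ C = (C₁ ∪ C₂) \ {e})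

/-- `M` is the series connection of `M₁` and `M₂` relative to `e`,
characterized by its set of circuits. -/
def IsSeriesConn (M M₁ M₂ : Matroid α) (e : α) : Prop :=
  M₁.E ∩ M₂.E = {e} ∧ M.E = M₁.E ∪ M₂.E ∧
  ¬ MLoop M₁ e ∧ ¬ MColoop M₁ e ∧ ¬ MLoop M₂ e ∧ ¬ MColoop M₂ e ∧
  ∀ C, MCircuit M C ↔ ((MCircuit M₁ C ∧ e ∉ C) ∨ (MCircuit M₂ C ∧ e ∉ C) ∨
    ∃ C₁ C₂, MCircuit M₁ C₁ ∧ MCircuit M₂ C₂ ∧ e ∈ C₁ ∧ e ∈ C₂ ∧ C = C₁ ∪ C₂)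

/-- Contraction of a single element, via duality: `M/e = (M* − e)*`. -/
noncomputable def contractElem (M : Matroid α) (e : α) : Matroid α :=
  (M✶ ↾ (M.E \ {e}))✶

/-- `N` is a simplification of `M`: a simple restriction of `M` to a set meeting
every parallel class of non-loops. -/
def IsSimplificationOf (N M : Matroid α) : Prop :=
  ∃ S ⊆ M.E, N = M ↾ S ∧ MSimple N ∧
    ∀ x ∈ M.E, M.Indep {x} → ∃ y ∈ S, x = y ∨ MCircuit M {x, y}

/-- `M` is (a copy of) the uniform matroid `U_{m,m+1}`. -/
def IsUnifNearCircuit (M : Matroid α) (m : ℕ) : Prop :=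
  M.E.ncard = m + 1 ∧ ∀ I, M.Indep I ↔ I ⊆ M.E ∧ I.ncard ≤ m

/-- The minimal broken circuits of an ordered matroid. -/
def MinBrokenCircuit (r : α → α → Prop) (M : Matroid α) (B : Set α) : Prop :=
  BrokenCircuit r M B ∧ ∀ B', BrokenCircuit r M B' → B' ⊆ B → B' = B

/-- A (nonempty) connected component of a matroid: a circuit-closed subset of the
ground set on which the restriction is connected. -/
def IsComponent (M : Matroid α) (S : Set α) : Prop :=
  S ⊆ M.E ∧ S.Nonempty ∧ MConnected (M ↾ S) ∧
    ∀ C, MCircuit M C → C ⊆ S ∨ Disjoint C S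

/-- Series-parallel networks: matroids obtained from a two-element circuit by
iterated series and parallel connections. -/
inductive IsSPNetwork : Matroid α → Prop
  | twoCircuit (M : Matroid α) (h1 : M.E.ncard = 2) (h2 : MCircuit M M.E) : IsSPNetwork M
  | series (M N P : Matroid α) (e : α) (h1 : P.E.ncard = 2) (h2 : MCircuit P P.E)
      (hN : IsSPNetwork N) (h : IsSeriesConn M N P e) : IsSPNetwork M
  | parallel (M N P : Matroid α) (e : α) (h1 : P.E.ncard = 2) (h2 : MCircuit P P.E)
      (hN : IsSPNetwork N) (h : IsParallelConn M N P e) : IsSPNetwork M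

/-- Iterated parallel connections of uniform matroids `U_{m,m+1}`, `m ≥ 2`. -/
inductive IsIterParallelUnif : Matroid α → Prop
  | unif (M : Matroid α) (m : ℕ) (h2 : 2 ≤ m) (h : IsUnifNearCircuit M m) :
      IsIterParallelUnif M
  | parallel (M N P : Matroid α) (e : α) (m : ℕ) (h2 : 2 ≤ m)
      (hN : IsIterParallelUnif N) (hP : IsUnifNearCircuit P m)
      (h : IsParallelConn M N P e) : IsIterParallelUnif M

/-- `M` is graphic: its circuits are the edge sets of cycles of some graph. -/
def IsGraphic (M : Matroid α) : Prop :=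
  ∃ (V : Type) (G : SimpleGraph V) (f : α → Sym2 V),
    Set.InjOn f M.E ∧ (∀ a ∈ M.E, f a ∈ G.edgeSet) ∧
    ∀ C, MCircuit M C ↔ C ⊆ M.E ∧
      ∃ (u : V) (w : G.Walk u u), w.IsCycle ∧ f '' C = {x | x ∈ w.edges}

/-- A minimal non-face of a complex. -/
def MinNonFace (Δ : Set (Set α)) (s : Set α) : Prop :=
  s ⊆ vertexSet Δ ∧ s ∉ Δ ∧ ∀ t, t ⊂ s → t ∈ Δ

/-- A complete intersection complex: the minimal non-faces are pairwise disjoint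
(equivalently, the Stanley–Reisner ring is a complete intersection). -/
def IsCIComplex (Δ : Set (Set α)) : Prop :=
  ∀ s t, MinNonFace Δ s → MinNonFace Δ t → s ≠ t → Disjoint s t

/-- The Stanley–Reisner ring of a complex over a field `K`. -/
abbrev SRRing (K : Type) [Field K] (Δ : Set (Set α)) :=
  MvPolynomial (vertexSet Δ) K ⧸ (Ideal.span
    {m : MvPolynomial (vertexSet Δ) K | ∃ s : Finset (vertexSet Δ),
      (Subtype.val '' (s : Set (vertexSet Δ))) ∉ Δ ∧ m = ∏ i ∈ s, MvPolynomial.X i})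

/-- A Gorenstein ring: Noetherian with finite self-injective dimension
(expressed by eventual vanishing of `Ext^i(—, R)`). -/
def IsGorensteinRing (R : Type u) [CommRing R] : Prop :=
  IsNoetherianRing R ∧ ∃ n : ℕ, ∀ (M : ModuleCat.{u} R) (i : ℕ), n < i →
    Subsingleton (((Ext R (ModuleCat.{u} R) i).obj (Opposite.op M)).obj (ModuleCat.of R R))

/-!
Let `x` be the least element of `E \ cl F`. It is a cone point of the link of `F`: any face
`H ⊇ F` with `H ∪ {x}` independent stays a face after adding `x`, since a broken circuit of
`H ∪ {x}` would have its least element below `x`, hence in `cl F`, forcing `x ∈ cl H`.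
So if `a` is a vertex of the link not adjacent to `x`, then `x ∈ cl (F ∪ {a})`. An `n`-gon with
`n ≥ 5` has an edge `{a, b}` with neither end adjacent to `x`; exchanging `x` gives
`b ∈ cl (F ∪ {a})`, contradicting that `F ∪ {a, b}` is independent.
-/

lemma mCircuit_iff_isCircuit {M : Matroid α} {C : Set α} : MCircuit M C ↔ M.IsCircuit C := by
  rw [isCircuit_iff_forall_ssubset, Dep, and_assoc]
  exact Iff.rfl

lemma mem_closure_insert_of_mem_closure_insert {M : Matroid α} {F : Set α} {a b x : α}
    (ha : x ∈ M.closure (insert a F)) (hb : x ∈ M.closure (insert b F))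
    (hx : x ∉ M.closure F) : b ∈ M.closure (insert a F) := by
  have hbx : b ∈ M.closure (insert x F) := (closure_exchange ⟨hb, hx⟩).1
  rw [← closure_insert_eq_of_mem_closure ha]
  exact M.closure_mono (insert_subset_insert (subset_insert a F)) hbx

section BrokenCircuitComplex

variable [LinearOrder α] {M : Matroid α}

lemma indep_of_mem_bcc (hfin : M.E.Finite) {G : Set α} (hG : G ∈ BCC (· ≤ ·) M) :
    M.Indep G := by
  by_contra hdep
  obtain ⟨C, hCG, hC⟩ := Dep.exists_isCircuit_subset ⟨hdep, hG.1⟩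
  obtain ⟨e, heC, hemin⟩ :=
    exists_min_image C id (hfin.subset hC.subset_ground) hC.nonempty
  exact hG.2 (C \ {e}) ⟨C, e, mCircuit_iff_isCircuit.2 hC, heC, hemin, rfl⟩
    (sdiff_subset.trans hCG)

lemma insert_mem_bcc {H : Set α} {x : α} (hH : H ∈ BCC (· ≤ ·) M)
    (hlt : ∀ y ∈ M.E, y < x → y ∈ M.closure H) (hind : M.Indep (insert x H)) :
    insert x H ∈ BCC (· ≤ ·) M := by
  by_cases hxH : x ∈ H
  · rwa [insert_eq_of_mem hxH]
  refine ⟨hind.subset_ground, ?_⟩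
  rintro _ ⟨C, e, hC, heC, hemin, rfl⟩ hCH
  have hxC : x ∈ C \ {e} := by
    by_contra hxC
    exact hH.2 _ ⟨C, e, hC, heC, hemin, rfl⟩
      fun y hy => (hCH hy).resolve_left fun h => hxC (h ▸ hy)
  rw [mCircuit_iff_isCircuit] at hC
  have heH : e ∈ M.closure H :=
    hlt e (hC.subset_ground heC) (lt_of_le_of_ne (hemin x hxC.1) fun h => hxC.2 h.symm)
  have hCx : C \ {x} ⊆ M.closure H := by
    intro y hy
    by_cases hye : y = e
    · exact hye ▸ heH
    · exact M.subset_closure H hH.1 ((hCH ⟨hy.1, hye⟩).resolve_left hy.2)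
  have hxH' : x ∈ M.closure H := closure_subset_closure_of_subset_closure hCx
    (hC.mem_closure_sdiff_singleton_of_mem hxC.1)
  exact (((hind.subset (subset_insert x H)).insert_indep_iff_of_notMem hxH).1 hind).2 hxH'

lemma mem_ground_sdiff_closure_of_singleton_mem_linkOf (hfin : M.E.Finite) {F : Set α}
    {a : α} (ha : {a} ∈ linkOf (BCC (· ≤ ·) M) F) : a ∈ M.E \ M.closure F := by
  have hind := indep_of_mem_bcc hfin ha.1
  rw [union_singleton] at hind
  exact ((hind.subset (subset_insert a F)).insert_indep_iff_of_notMem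
    (disjoint_singleton_right.1 ha.2)).1 hind

lemma notMem_closure_insert_of_pair_mem_linkOf (hfin : M.E.Finite) {F : Set α} {a b : α}
    (hab : {a, b} ∈ linkOf (BCC (· ≤ ·) M) F) (hne : a ≠ b) : b ∉ M.closure (insert a F) := by
  have hind := indep_of_mem_bcc hfin hab.1
  rw [union_insert, union_singleton, insert_comm] at hind
  have hbF : b ∉ F := disjoint_insert_right.1 hab.2 |>.2 |> disjoint_singleton_right.1
  exact (((hind.subset (subset_insert b _)).insert_indep_iff_of_notMem
    (by simp [hne.symm, hbF])).1 hind).2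

lemma mem_closure_insert_of_pair_notMem_linkOf (hfin : M.E.Finite) {F : Set α} {a x : α}
    (hxE : x ∈ M.E) (hxF : x ∉ F) (hlt : ∀ y ∈ M.E, y < x → y ∈ M.closure F)
    (ha : {a} ∈ linkOf (BCC (· ≤ ·) M) F) (hxa : {x, a} ∉ linkOf (BCC (· ≤ ·) M) F) :
    x ∈ M.closure (insert a F) := by
  have hH : insert a F ∈ BCC (· ≤ ·) M := union_singleton (s := F) ▸ ha.1
  by_contra hx
  refine hxa ⟨?_, disjoint_insert_right.2 ⟨hxF, ha.2⟩⟩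
  rw [union_insert, union_singleton]
  exact insert_mem_bcc hH (fun y hy hyx => M.closure_mono (subset_insert a F) (hlt y hy hyx))
    ((indep_of_mem_bcc hfin hH).insert_indep_iff.2 (Or.inl ⟨hxE, hx⟩))

end BrokenCircuitComplex

lemma add_mod_ne_add_mod {n t a b : ℕ} (ha : a < n) (hb : b < n) (hab : a ≠ b) :
    (t + a) % n ≠ (t + b) % n :=
  fun h => hab ((Nat.ModEq.add_left_cancel' t h).eq_of_lt_of_lt ha hb)

section NGon

variable {Δ : Set (Set α)} {n : ℕ} {v : ℕ → α}

def ngonComplex (n : ℕ) (v : ℕ → α) : Set (Set α) :=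
  {s | s = ∅ ∨ (∃ i < n, s = {v i}) ∨ ∃ i < n, s = {v i, v ((i + 1) % n)}}

lemma eq_or_adjacent_of_pair_mem_ngonComplex (hinj : ∀ i j, i < n → j < n → v i = v j → i = j)
    {i j : ℕ} (hi : i < n) (hj : j < n) (h : {v i, v j} ∈ ngonComplex n v) :
    i = j ∨ j = (i + 1) % n ∨ i = (j + 1) % n := by
  rcases h with h | ⟨k, -, h⟩ | ⟨k, hk, h⟩
  · exact absurd h (insert_nonempty _ _).ne_empty
  · have hik : v i = v k := mem_singleton_iff.1 (h ▸ mem_insert _ _)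
    have hjk : v j = v k := mem_singleton_iff.1 (h ▸ mem_insert_of_mem _ rfl)
    exact Or.inl (hinj i j hi hj (hik.trans hjk.symm))
  · have hk' : (k + 1) % n < n := Nat.mod_lt _ (by omega)
    rcases pair_eq_pair_iff.1 h with ⟨hik, hjk⟩ | ⟨hik, hjk⟩
    · obtain rfl := hinj i k hi hk hik
      exact Or.inr (Or.inl (hinj _ _ hj hk' hjk))
    · obtain rfl := hinj j k hj hk hjk
      exact Or.inr (Or.inr (hinj _ _ hi hk' hik))

lemma exists_eq_of_singleton_mem_ngonComplex (hinj : ∀ i j, i < n → j < n → v i = v j → i = j)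
    (hn : 2 ≤ n) {u : α} (hu : {u} ∈ ngonComplex n v) : ∃ t < n, u = v t := by
  rcases hu with h | ⟨t, ht, h⟩ | ⟨i, hi, h⟩
  · exact absurd h (singleton_ne_empty u)
  · exact ⟨t, ht, singleton_injective h⟩
  · have hui : v i = u := mem_singleton_iff.1 (h ▸ mem_insert _ _)
    have hui' : v ((i + 1) % n) = u := mem_singleton_iff.1 (h ▸ mem_insert_of_mem _ rfl)
    have hne : (i + 1) % n ≠ (i + 0) % n :=
      add_mod_ne_add_mod (by omega) (by omega) one_ne_zero
    rw [add_zero, Nat.mod_eq_of_lt hi] at hne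
    exact absurd (hinj _ _ (Nat.mod_lt _ (by omega)) hi (hui'.trans hui.symm)) hne

lemma IsNGon.exists_edge_avoiding (h : IsNGon Δ n) (hn : 5 ≤ n) {u : α} (hu : {u} ∈ Δ) :
    ∃ a b, a ≠ b ∧ {a} ∈ Δ ∧ {b} ∈ Δ ∧ {a, b} ∈ Δ ∧ {u, a} ∉ Δ ∧ {u, b} ∉ Δ := by
  obtain ⟨-, v, hinj, rfl⟩ := h
  have hmod : ∀ i, i % n < n := fun i => Nat.mod_lt _ (by omega)
  obtain ⟨t, ht, rfl⟩ := exists_eq_of_singleton_mem_ngonComplex hinj (by omega) hu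
  have htmod : (t + 0) % n = t := Nat.mod_eq_of_lt ht
  have hfar : ∀ k, 2 ≤ k → k ≤ 3 → {v t, v ((t + k) % n)} ∉ ngonComplex n v := by
    intro k hk2 hk3 hmem
    rcases eq_or_adjacent_of_pair_mem_ngonComplex hinj ht (hmod _) hmem with h | h | h
    · exact add_mod_ne_add_mod (by omega) (by omega) (by omega) (htmod.trans h)
    · exact add_mod_ne_add_mod (by omega) (by omega) (by omega) h
    · rw [Nat.mod_add_mod, add_assoc] at h
      exact add_mod_ne_add_mod (by omega) (by omega) (by omega) (htmod.trans h)
  refine ⟨v ((t + 2) % n), v ((t + 3) % n), fun h => ?_, ?_, ?_, ?_,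
    hfar 2 le_rfl (by omega), hfar 3 (by omega) le_rfl⟩
  · exact add_mod_ne_add_mod (by omega) (by omega) (by omega) (hinj _ _ (hmod _) (hmod _) h)
  · exact Or.inr (Or.inl ⟨_, hmod _, rfl⟩)
  · exact Or.inr (Or.inl ⟨_, hmod _, rfl⟩)
  · exact Or.inr (Or.inr ⟨(t + 2) % n, hmod _, by rw [Nat.mod_add_mod]⟩)

lemma IsNGon.exists_singleton_mem (h : IsNGon Δ n) : ∃ u, {u} ∈ Δ := by
  obtain ⟨hn, v, -, rfl⟩ := h
  exact ⟨v 0, Or.inr (Or.inl ⟨0, by omega, rfl⟩)⟩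

end NGon

theorem ngon_link_of_brokenCircuitComplex_general {α : Type*} [LinearOrder α] (M : Matroid α)
    (hfin : M.E.Finite)
    (F : Set α) (hF : F ∈ BCC (· ≤ ·) M) (n : ℕ)
    (hgon : IsNGon (linkOf (BCC (· ≤ ·) M) F) n) :
    n ≤ 4 := by
  by_contra! hn
  obtain ⟨a₀, ha₀⟩ := hgon.exists_singleton_mem
  obtain ⟨x, ⟨hxE, hxcl⟩, hxmin⟩ := exists_min_image (M.E \ M.closure F) id hfin.sdiff
    ⟨a₀, mem_ground_sdiff_closure_of_singleton_mem_linkOf hfin ha₀⟩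
  have hlt : ∀ y ∈ M.E, y < x → y ∈ M.closure F := fun y hy hyx =>
    by_contra fun hycl => (hxmin y ⟨hy, hycl⟩).not_gt hyx
  have hxF : x ∉ F := fun h => hxcl (M.subset_closure F hF.1 h)
  have hx : {x} ∈ linkOf (BCC (· ≤ ·) M) F := by
    refine ⟨?_, disjoint_singleton_right.2 hxF⟩
    rw [union_singleton]
    exact insert_mem_bcc hF hlt
      ((indep_of_mem_bcc hfin hF).insert_indep_iff.2 (Or.inl ⟨hxE, hxcl⟩))
  obtain ⟨a, b, hab, ha, hb, hedge, hxa, hxb⟩ := hgon.exists_edge_avoiding (by omega) hx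
  exact notMem_closure_insert_of_pair_mem_linkOf hfin hedge hab
    (mem_closure_insert_of_mem_closure_insert
      (mem_closure_insert_of_pair_notMem_linkOf hfin hxE hxF hlt ha hxa)
      (mem_closure_insert_of_pair_notMem_linkOf hfin hxE hxF hlt hb hxb) hxcl)

/-- Lemma 3.4 of the paper. -/
theorem ngon_link_of_brokenCircuitComplex {α : Type*} [LinearOrder α] (M : Matroid α)
    (hfin : M.E.Finite) (hdim : ∃ s ∈ BCC (· ≤ ·) M, s.ncard = 2)
    (F : Set α) (hF : F ∈ BCC (· ≤ ·) M) (n : ℕ)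
    (hgon : IsNGon (linkOf (BCC (· ≤ ·) M) F) n) :
    n ≤ 4 :=
  ngon_link_of_brokenCircuitComplex_general M hfin F hF n hgon

end PaperBC
end

section
/- Let M be a simple matroid such that every connected component of M is either a coloop or an iterated parallel connection of uniform matroids of the form U_{m,m+1} with m ≥ 2. Then there exists a linear ordering < of the ground set of M such that the broken circuit complex BC(M,<) is a complete intersection complex, i.e., the minimal broken circuits of (M,<) are pairwise disjoint. -/
open Set Polynomial Matroid CategoryTheory

universe u

namespace PaperBC

variable {α : Type*}

/-!
Number each component separately. In an iterated parallel connection, number the elements so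
that each newly attached copy `P` of `U_{m,m+1}` comes after everything attached before, except
its connecting point `e`. Then `P.E - e` is a broken circuit, and every broken circuit of the
connection either is one of the part built so far or contains `P.E - e`. By induction the sets
`P.E - e` (with the broken circuit of the first piece) are pairwise disjoint broken circuits, and
every broken circuit contains one of them, so they are exactly the minimal broken circuits.
Circuits lie inside connected components and coloops lie on no circuit, so the numberings of the
components can be combined into one linear order arbitrarily.
-/

section BrokenCircuits

variable {r s : α → α → Prop} {M N : Matroid α} {B C S : Set α} {e : α}

lemma mcircuit_iff_isCircuit : MCircuit M C ↔ M.IsCircuit C := by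
  rw [isCircuit_iff_forall_ssubset, Dep, and_assoc]
  rfl

lemma mcircuit_restrict_iff (hS : S ⊆ M.E) : MCircuit (M ↾ S) C ↔ MCircuit M C ∧ C ⊆ S := by
  simp only [mcircuit_iff_isCircuit, restrict_isCircuit_iff hS]

lemma MColoop.notMem_of_mcircuit (he : MColoop M e) (hC : MCircuit M C) : e ∉ C :=
  (isColoop_iff_forall_mem_isBase.2 he.2).notMem_isCircuit (mcircuit_iff_isCircuit.1 hC)

lemma BrokenCircuit.subset_ground (h : BrokenCircuit r M B) : B ⊆ M.E := by
  obtain ⟨C, e, hC, -, -, rfl⟩ := h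
  exact sdiff_subset.trans hC.2.1

lemma BrokenCircuit.mono (hNM : ∀ C, MCircuit N C → MCircuit M C) (h : BrokenCircuit r N B) :
    BrokenCircuit r M B := by
  obtain ⟨C, e, hC, he, hle, rfl⟩ := h
  exact ⟨C, e, hNM C hC, he, hle, rfl⟩

lemma brokenCircuit_congr (h : ∀ a ∈ M.E, ∀ b ∈ M.E, r a b ↔ s a b) :
    BrokenCircuit r M = BrokenCircuit s M := by
  funext B
  refine propext <| exists₂_congr fun C e => and_congr_right fun hC => and_congr_right fun he => ?_
  exact and_congr_left' <| forall₂_congr fun x hx => h e (hC.2.1 he) x (hC.2.1 hx)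

def HasDisjointBrokenCircuitCover (r : α → α → Prop) (M : Matroid α) : Prop :=
  ∃ 𝒟 : Set (Set α), (∀ D ∈ 𝒟, BrokenCircuit r M D) ∧ 𝒟.PairwiseDisjoint id ∧
    ∀ B, BrokenCircuit r M B → ∃ D ∈ 𝒟, D ⊆ B

lemma hasDisjointBrokenCircuitCover_congr (h : ∀ a ∈ M.E, ∀ b ∈ M.E, r a b ↔ s a b) :
    HasDisjointBrokenCircuitCover r M ↔ HasDisjointBrokenCircuitCover s M := by
  rw [HasDisjointBrokenCircuitCover, HasDisjointBrokenCircuitCover, brokenCircuit_congr h]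

lemma hasDisjointBrokenCircuitCover_of_pairwise
    (h : ∀ B B', BrokenCircuit r M B → BrokenCircuit r M B' → B ≠ B' → Disjoint B B') :
    HasDisjointBrokenCircuitCover r M :=
  ⟨{B | BrokenCircuit r M B}, fun _ hB => hB, fun B hB B' hB' => h B B' hB hB',
    fun B hB => ⟨B, hB, subset_rfl⟩⟩

theorem HasDisjointBrokenCircuitCover.disjoint_of_minBrokenCircuit
    (h : HasDisjointBrokenCircuitCover r M) {B B' : Set α} (hB : MinBrokenCircuit r M B)
    (hB' : MinBrokenCircuit r M B') (hne : B ≠ B') : Disjoint B B' := by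
  obtain ⟨𝒟, h𝒟, hdisj, hcov⟩ := h
  have hmem : ∀ {B}, MinBrokenCircuit r M B → B ∈ 𝒟 := fun {B} hB => by
    obtain ⟨D, hD, hDB⟩ := hcov B hB.1
    rwa [← hB.2 D (h𝒟 D hD) hDB]
  exact hdisj (hmem hB) (hmem hB') hne

theorem HasDisjointBrokenCircuitCover.of_restrict {𝒮 : Set (Set α)} (hE : ∀ S ∈ 𝒮, S ⊆ M.E)
    (h𝒮 : 𝒮.PairwiseDisjoint id) (hcirc : ∀ C, MCircuit M C → ∃ S ∈ 𝒮, C ⊆ S)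
    (h : ∀ S ∈ 𝒮, HasDisjointBrokenCircuitCover r (M ↾ S)) : HasDisjointBrokenCircuitCover r M := by
  choose! 𝒟 h𝒟 hdisj hcov using h
  refine ⟨⋃ S ∈ 𝒮, 𝒟 S, ?_, ?_, ?_⟩
  · simp only [mem_iUnion]
    rintro D ⟨S, hS, hD⟩
    exact (h𝒟 S hS D hD).mono fun C hC => ((mcircuit_restrict_iff (hE S hS)).1 hC).1
  · refine PairwiseDisjoint.biUnion (h𝒮.mono_on fun S hS => ?_) hdisj
    exact iSup₂_le fun D hD => (h𝒟 S hS D hD).subset_ground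
  · rintro B ⟨C, e, hC, he, hle, rfl⟩
    obtain ⟨S, hS, hCS⟩ := hcirc C hC
    obtain ⟨D, hD, hDB⟩ :=
      hcov S hS _ ⟨C, e, (mcircuit_restrict_iff (hE S hS)).2 ⟨hC, hCS⟩, he, hle, rfl⟩
    exact ⟨D, mem_biUnion hS hD, hDB⟩

lemma MColoop.hasDisjointBrokenCircuitCover_restrict (he : MColoop M e) :
    HasDisjointBrokenCircuitCover r (M ↾ {e}) := by
  refine hasDisjointBrokenCircuitCover_of_pairwise fun B _ hB => ?_
  obtain ⟨C, -, hC, -, -, -⟩ := hB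
  obtain ⟨hC, hCe⟩ := (mcircuit_restrict_iff (singleton_subset_iff.2 he.1)).1 hC
  obtain ⟨x, hx⟩ := (mcircuit_iff_isCircuit.1 hC).nonempty
  exact absurd (hCe hx ▸ hx) (he.notMem_of_mcircuit hC)

end BrokenCircuits

section ParallelConn

variable {r : α → α → Prop} {M N P : Matroid α} {B C : Set α} {e : α} {m : ℕ}

lemma IsUnifNearCircuit.ground_finite (hP : IsUnifNearCircuit P m) : P.E.Finite :=
  finite_of_ncard_ne_zero (by rw [hP.1]; omega)

lemma IsUnifNearCircuit.mcircuit_iff (hP : IsUnifNearCircuit P m) : MCircuit P C ↔ C = P.E := by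
  have hcard := hP.1
  refine ⟨fun hC => eq_of_subset_of_ncard_le hC.2.1 ?_ hP.ground_finite, ?_⟩
  · by_contra hlt
    exact hC.1 ((hP.2 C).2 ⟨hC.2.1, by omega⟩)
  · rintro rfl
    refine ⟨fun hI => by have := ((hP.2 _).1 hI).2; omega, subset_rfl, fun D hD => ?_⟩
    have := ncard_lt_ncard hD hP.ground_finite
    exact (hP.2 D).2 ⟨hD.subset, by omega⟩

lemma IsUnifNearCircuit.hasDisjointBrokenCircuitCover (hP : IsUnifNearCircuit P m)
    (hr : ∀ a ∈ P.E, ∀ b ∈ P.E, r a b → r b a → a = b) : HasDisjointBrokenCircuitCover r P := by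
  refine hasDisjointBrokenCircuitCover_of_pairwise ?_
  rintro _ _ ⟨C, e, hC, he, hle, rfl⟩ ⟨C', e', hC', he', hle', rfl⟩ hne
  rw [hP.mcircuit_iff] at hC hC'
  subst hC hC'
  exact absurd (by rw [hr e he e' he' (hle e' he') (hle' e he)]) hne

lemma IsParallelConn.mem_left (h : IsParallelConn M N P e) : e ∈ N.E :=
  (h.1.symm.subset rfl).1

lemma IsParallelConn.mem_right (h : IsParallelConn M N P e) : e ∈ P.E :=
  (h.1.symm.subset rfl).2

lemma IsParallelConn.sdiff_eq (h : IsParallelConn M N P e) : P.E \ N.E = P.E \ {e} := by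
  rw [← h.1, sdiff_inter_self_eq_sdiff]

lemma IsParallelConn.mcircuit_of_left (h : IsParallelConn M N P e) (hC : MCircuit N C) :
    MCircuit M C :=
  (h.2.2.2.2.2.2 C).2 (Or.inl hC)

lemma IsParallelConn.mcircuit_of_right (h : IsParallelConn M N P e) (hC : MCircuit P C) :
    MCircuit M C :=
  (h.2.2.2.2.2.2 C).2 (Or.inr (Or.inl hC))

lemma IsParallelConn.exists_mem_ne_of_mcircuit_left (h : IsParallelConn M N P e)
    (hC : MCircuit N C) : ∃ y ∈ C, y ≠ e := by
  by_contra! hCe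
  exact h.2.2.1 ⟨h.mem_left, fun hi => hC.1 (hi.subset fun y hy => hCe y hy)⟩

lemma IsParallelConn.brokenCircuit_or_subset (h : IsParallelConn M N P e)
    (hP : IsUnifNearCircuit P m) (hr : ∀ x ∈ N.E, ∀ y ∈ P.E \ {e}, ¬ r y x)
    (hB : BrokenCircuit r M B) : BrokenCircuit r N B ∨ P.E \ {e} ⊆ B := by
  obtain ⟨C, e₁, hC, he₁, hle, rfl⟩ := hB
  have hleast : ∀ y ∈ C, y ∈ N.E → e₁ ∉ P.E \ {e} := fun y hy hyN he₁P =>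
    hr y hyN e₁ he₁P (hle y hy)
  rcases (h.2.2.2.2.2.2 C).1 hC with hCN | hCP | ⟨C₁, C₂, hC₁, hC₂, heC₁, -, rfl⟩
  · exact Or.inl ⟨C, e₁, hCN, he₁, hle, rfl⟩
  · rw [hP.mcircuit_iff] at hCP
    subst hCP
    obtain rfl : e₁ = e := by_contra fun hne => hleast e h.mem_right h.mem_left ⟨he₁, hne⟩
    exact Or.inr subset_rfl
  · rw [hP.mcircuit_iff] at hC₂
    subst hC₂
    obtain ⟨y, hyC₁, hye⟩ := h.exists_mem_ne_of_mcircuit_left hC₁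
    refine Or.inr fun x hx => ⟨⟨Or.inr hx.1, hx.2⟩, fun hxe₁ => ?_⟩
    rw [mem_singleton_iff.1 hxe₁] at hx
    exact hleast y ⟨Or.inl hyC₁, hye⟩ (hC₁.2.1 hyC₁) hx

theorem HasDisjointBrokenCircuitCover.parallelConn (h : IsParallelConn M N P e)
    (hP : IsUnifNearCircuit P m) (hN : HasDisjointBrokenCircuitCover r N)
    (hre : ∀ x ∈ P.E, r e x) (hr : ∀ x ∈ N.E, ∀ y ∈ P.E \ {e}, ¬ r y x) :
    HasDisjointBrokenCircuitCover r M := by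
  obtain ⟨𝒟, h𝒟, hdisj, hcov⟩ := hN
  refine ⟨insert (P.E \ {e}) 𝒟, ?_, ?_, ?_⟩
  · rintro D (rfl | hD)
    · exact ⟨P.E, e, h.mcircuit_of_right (hP.mcircuit_iff.2 rfl), h.mem_right, hre, rfl⟩
    · exact (h𝒟 D hD).mono fun C => h.mcircuit_of_left
  · refine hdisj.insert fun D hD _ => ?_
    rw [← h.sdiff_eq]
    exact disjoint_sdiff_left.mono_right (h𝒟 D hD).subset_ground
  · intro B hB
    rcases h.brokenCircuit_or_subset hP hr hB with hBN | hPB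
    · obtain ⟨D, hD, hDB⟩ := hcov B hBN
      exact ⟨D, mem_insert_of_mem _ hD, hDB⟩
    · exact ⟨_, mem_insert _ _, hPB⟩

end ParallelConn

lemma exists_injOn_union_lt {A B : Set α} (hA : A.Finite) (hB : B.Countable) {f : α → ℕ}
    (hf : InjOn f A) :
    ∃ g : α → ℕ, InjOn g (A ∪ B) ∧ EqOn g f A ∧ ∀ a ∈ A, ∀ b ∈ B \ A, g a < g b := by
  classical
  obtain ⟨K, hK⟩ := (hA.image f).bddAbove
  obtain ⟨h, hh⟩ := countable_iff_exists_injOn.1 hB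
  set g : α → ℕ := fun x => if x ∈ A then f x else K + 1 + h x
  have hgA : EqOn g f A := fun x hx => if_pos hx
  have hgB : ∀ x ∉ A, g x = K + 1 + h x := fun x hx => if_neg hx
  have hlt : ∀ a ∈ A, ∀ b ∈ B \ A, g a < g b := fun a ha b hb => by
    have := hK (mem_image_of_mem f ha)
    rw [hgA ha, hgB b hb.2]
    omega
  refine ⟨g, ?_, hgA, hlt⟩
  rw [← union_sdiff_self, injOn_union disjoint_sdiff_right]
  refine ⟨hf.congr hgA.symm, fun x hx y hy hxy => hh hx.1 hy.1 ?_,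
    fun a ha b hb => (hlt a ha b hb).ne⟩
  rw [hgB x hx.2, hgB y hy.2] at hxy
  omega

section IterParallelUnif

variable {M : Matroid α}

theorem IsIterParallelUnif.ground_finite (h : IsIterParallelUnif M) : M.E.Finite := by
  induction h with
  | unif M m _ hM => exact hM.ground_finite
  | parallel M N P e m _ _ hP h ih => exact h.2.1 ▸ ih.union hP.ground_finite

theorem IsIterParallelUnif.exists_injOn_hasDisjointBrokenCircuitCover (h : IsIterParallelUnif M) :
    ∃ f : α → ℕ, InjOn f M.E ∧ HasDisjointBrokenCircuitCover (fun a b => f a ≤ f b) M := by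
  induction h with
  | unif M m _ hM =>
    obtain ⟨f, hf⟩ := countable_iff_exists_injOn.1 hM.ground_finite.countable
    exact ⟨f, hf, hM.hasDisjointBrokenCircuitCover fun a ha b hb hab hba =>
      hf ha hb (hab.antisymm hba)⟩
  | parallel M N P e m _ hN hP h ih =>
    obtain ⟨f, hf, hcov⟩ := ih
    obtain ⟨g, hg, hgf, hlt⟩ := exists_injOn_union_lt hN.ground_finite hP.ground_finite.countable hf
    rw [h.sdiff_eq] at hlt
    refine ⟨g, h.2.1 ▸ hg, ?_⟩
    have hcovN : HasDisjointBrokenCircuitCover (fun a b => g a ≤ g b) N :=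
      (hasDisjointBrokenCircuitCover_congr fun a ha b hb => by rw [hgf ha, hgf hb]).1 hcov
    refine hcovN.parallelConn h hP (fun x hx => ?_) fun x hx y hy => (hlt x hx y hy).not_ge
    obtain rfl | hxe := eq_or_ne x e
    · exact le_rfl
    · exact (hlt e h.mem_left x ⟨hx, hxe⟩).le

end IterParallelUnif

section Components

variable {M : Matroid α} {S : Set α} {x y z : α}

def ConnectedTo (M : Matroid α) (x y : α) : Prop :=
  x = y ∨ ∃ C, M.IsCircuit C ∧ x ∈ C ∧ y ∈ C

def componentOf (M : Matroid α) (x : α) : Set α := {y | y ∈ M.E ∧ ConnectedTo M x y}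

lemma ConnectedTo.symm (h : ConnectedTo M x y) : ConnectedTo M y x := by
  rcases h with rfl | ⟨C, hC, hx, hy⟩
  · exact Or.inl rfl
  · exact Or.inr ⟨C, hC, hy, hx⟩

/-- Oxley, Proposition 4.1.2: induction on `|C₂ \ C₁|`, using strong circuit elimination twice. -/
lemma connectedTo_of_inter_nonempty [M.Finitary] {C₁ C₂ : Set α} (hC₁ : M.IsCircuit C₁)
    (hC₂ : M.IsCircuit C₂) (hx : x ∈ C₁) (hz : z ∈ C₂) (hmeet : (C₁ ∩ C₂).Nonempty) :
    ConnectedTo M x z := by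
  induction hn : (C₂ \ C₁).ncard using Nat.strong_induction_on generalizing C₂ with
  | _ n ih =>
  by_cases hxC₂ : x ∈ C₂
  · exact Or.inr ⟨C₂, hC₂, hxC₂, hz⟩
  obtain ⟨e, heC₁, heC₂⟩ := hmeet
  obtain ⟨C₃, hC₃ss, hC₃, hxC₃⟩ := hC₁.strong_elimination hC₂ heC₁ heC₂ hx hxC₂
  by_cases hzC₃ : z ∈ C₃
  · exact Or.inr ⟨C₃, hC₃, hxC₃, hzC₃⟩
  obtain ⟨f, hfC₃, hfC₁⟩ : ∃ f ∈ C₃, f ∉ C₁ := by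
    by_contra! h
    exact (hC₃ss (hC₃.eq_of_subset_isCircuit hC₁ h ▸ heC₁)).2 rfl
  have hfC₂ : f ∈ C₂ := (hC₃ss hfC₃).1.resolve_left hfC₁
  obtain ⟨C₄, hC₄ss, hC₄, hzC₄⟩ := hC₂.strong_elimination hC₃ hfC₂ hfC₃ hz hzC₃
  have hC₄C₂ : C₄ \ C₁ ⊆ (C₂ \ C₁) \ {f} := by
    rintro y ⟨hyC₄, hyC₁⟩
    obtain ⟨hy | hy, hyf⟩ := hC₄ss hyC₄
    · exact ⟨⟨hy, hyC₁⟩, hyf⟩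
    · exact ⟨⟨(hC₃ss hy).1.resolve_left hyC₁, hyC₁⟩, hyf⟩
  have hmeet' : (C₁ ∩ C₄).Nonempty := by
    by_contra! h
    have hsub : C₄ ⊆ C₂ := fun y hy =>
      (hC₄C₂ ⟨hy, fun hy₁ => h.subset ⟨hy₁, hy⟩⟩).1.1
    exact (hC₄ss (hC₄.eq_of_subset_isCircuit hC₂ hsub ▸ hfC₂)).2 rfl
  refine ih _ ?_ hC₄ hzC₄ hmeet' rfl
  rw [← hn]
  exact ncard_lt_ncard (hC₄C₂.trans_ssubset (sdiff_singleton_ssubset.2 ⟨hfC₂, hfC₁⟩))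
    (hC₂.finite.subset sdiff_subset)

lemma ConnectedTo.trans [M.Finitary] (hxy : ConnectedTo M x y) (hyz : ConnectedTo M y z) :
    ConnectedTo M x z := by
  rcases hxy with rfl | ⟨C₁, hC₁, hx, hy⟩
  · exact hyz
  rcases hyz with rfl | ⟨C₂, hC₂, hy', hz⟩
  · exact Or.inr ⟨C₁, hC₁, hx, hy⟩
  exact connectedTo_of_inter_nonempty hC₁ hC₂ hx hz ⟨y, hy, hy'⟩

lemma IsComponent.componentOf_eq (hS : IsComponent M S) (hx : x ∈ S) : componentOf M x = S := by
  refine Subset.antisymm (fun y ⟨_, hxy⟩ => ?_) fun y hy => ⟨hS.1 hy, ?_⟩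
  · rcases hxy with rfl | ⟨C, hC, hxC, hyC⟩
    · exact hx
    · exact ((hS.2.2.2 C (mcircuit_iff_isCircuit.2 hC)).resolve_right
        (not_disjoint_iff.2 ⟨x, hxC, hx⟩)) hyC
  · obtain rfl | hxy := eq_or_ne x y
    · exact Or.inl rfl
    obtain ⟨C, hC, hxC, hyC⟩ := hS.2.2.1.2 x hx y hy hxy
    exact Or.inr ⟨C, mcircuit_iff_isCircuit.1 ((mcircuit_restrict_iff hS.1).1 hC).1, hxC, hyC⟩

lemma pairwiseDisjoint_isComponent : {S | IsComponent M S}.PairwiseDisjoint id := by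
  intro S hS S' hS' hne
  refine not_not.1 fun h => hne ?_
  obtain ⟨x, hxS, hxS'⟩ := not_disjoint_iff.1 h
  rw [← hS.componentOf_eq hxS, ← IsComponent.componentOf_eq hS' hxS']

lemma isComponent_componentOf [M.Finitary] (hx : x ∈ M.E) : IsComponent M (componentOf M x) := by
  have hclosed : ∀ C, M.IsCircuit C → ¬ Disjoint C (componentOf M x) → C ⊆ componentOf M x := by
    intro C hC hmeet z hz
    obtain ⟨y, hyC, -, hxy⟩ := not_disjoint_iff.1 hmeet
    exact ⟨hC.subset_ground hz, hxy.trans (Or.inr ⟨C, hC, hyC, hz⟩)⟩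
  refine ⟨fun y hy => hy.1, ⟨x, hx, Or.inl rfl⟩, ⟨⟨x, hx, Or.inl rfl⟩, ?_⟩, fun C hC => ?_⟩
  · rintro a ⟨-, hxa⟩ b hb hab
    obtain rfl | ⟨C, hC, haC, hbC⟩ := hxa.symm.trans hb.2
    · exact absurd rfl hab
    refine ⟨C, (mcircuit_restrict_iff fun y hy => hy.1).2 ⟨mcircuit_iff_isCircuit.2 hC, ?_⟩,
      haC, hbC⟩
    exact hclosed C hC (not_disjoint_iff.2 ⟨b, hbC, hb⟩)
  · rw [mcircuit_iff_isCircuit] at hC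
    by_cases hmeet : Disjoint C (componentOf M x)
    · exact Or.inr hmeet
    · exact Or.inl (hclosed C hC hmeet)

lemma exists_isComponent_superset [M.Finitary] {C : Set α} (hC : MCircuit M C) :
    ∃ S, IsComponent M S ∧ C ⊆ S := by
  obtain ⟨x, hx⟩ := (mcircuit_iff_isCircuit.1 hC).nonempty
  refine ⟨componentOf M x, isComponent_componentOf (hC.2.1 hx), fun y hy => ⟨hC.2.1 hy, ?_⟩⟩
  exact Or.inr ⟨C, mcircuit_iff_isCircuit.1 hC, hx, hy⟩

end Components

theorem exists_isLinearOrder_of_lt {β : Type*} [LinearOrder β] (w : α → β) :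
    ∃ r : α → α → Prop, IsLinearOrder α r ∧ ∀ a b, w a < w b → r a b := by
  let key : α → β ×ₗ Cardinal := fun a => toLex (w a, embeddingToCardinal a)
  have hkey : Function.Injective key := fun a b hab =>
    embeddingToCardinal.injective (Prod.ext_iff.1 (toLex.injective hab)).2
  let _ : LinearOrder α := LinearOrder.lift' key hkey
  exact ⟨(· ≤ ·), inferInstance, fun a b h => (Prod.Lex.toLex_lt_toLex.2 (Or.inl h)).le⟩

lemma rel_iff_le_of_lt {β : Type*} [LinearOrder β] {r : α → α → Prop} (hr : IsLinearOrder α r)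
    {f : α → β} {S : Set α} (hf : InjOn f S) (hlt : ∀ a ∈ S, ∀ b ∈ S, f a < f b → r a b) :
    ∀ a ∈ S, ∀ b ∈ S, r a b ↔ f a ≤ f b := by
  intro a ha b hb
  rcases lt_trichotomy (f a) (f b) with h | h | h
  · exact iff_of_true (hlt a ha b hb h) h.le
  · obtain rfl := hf ha hb h
    exact iff_of_true (hr.refl a) le_rfl
  · exact iff_of_false (fun hab => h.ne' (congrArg f (hr.antisymm a b hab (hlt b hb a ha h))))
      h.not_ge

theorem exists_order_completeIntersection_general {α : Type*} (M : Matroid α)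
    (hfin : M.E.Finite)
    (hcomp : ∀ S, IsComponent M S →
      (∃ e, S = {e} ∧ MColoop M e) ∨ IsIterParallelUnif (M ↾ S)) :
    ∃ r : α → α → Prop, IsLinearOrder α r ∧
      ∀ B B', MinBrokenCircuit r M B → MinBrokenCircuit r M B' → B ≠ B' →
        Disjoint B B' := by
  have : M.Finite := ⟨hfin⟩
  have hlabel : ∀ S, IsComponent M S → ∃ f : α → ℕ, InjOn f S ∧
      HasDisjointBrokenCircuitCover (fun a b => f a ≤ f b) (M ↾ S) := by
    intro S hS
    rcases hcomp S hS with ⟨e, rfl, he⟩ | hS'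
    · exact ⟨0, injOn_singleton _ _, he.hasDisjointBrokenCircuitCover_restrict⟩
    · exact hS'.exists_injOn_hasDisjointBrokenCircuitCover
  choose! F hFinj hFcov using hlabel
  obtain ⟨r, hr, hrF⟩ := exists_isLinearOrder_of_lt fun a => F (componentOf M a) a
  refine ⟨r, hr, fun B B' hB hB' => HasDisjointBrokenCircuitCover.disjoint_of_minBrokenCircuit
    ?_ hB hB'⟩
  refine .of_restrict (fun S hS => hS.1) pairwiseDisjoint_isComponent
    (fun C => exists_isComponent_superset) fun S hS => ?_
  refine (hasDisjointBrokenCircuitCover_congr (rel_iff_le_of_lt hr (hFinj S hS) ?_)).2 (hFcov S hS)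
  intro a ha b hb hab
  exact hrF a b (by rwa [hS.componentOf_eq ha, hS.componentOf_eq hb])

/-- if every component of a simple matroid is a coloop or an
iterated parallel connection of `U_{m,m+1}`'s, then for some linear ordering the
minimal broken circuits are pairwise disjoint (complete intersection). -/
theorem exists_order_completeIntersection {α : Type*} (M : Matroid α)
    (hfin : M.E.Finite) (hsimple : MSimple M)
    (hcomp : ∀ S, IsComponent M S →
      (∃ e, S = {e} ∧ MColoop M e) ∨ IsIterParallelUnif (M ↾ S)) :
    ∃ r : α → α → Prop, IsLinearOrder α r ∧
      ∀ B B', MinBrokenCircuit r M B → MinBrokenCircuit r M B' → B ≠ B' →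
        Disjoint B B' :=
  exists_order_completeIntersection_general M hfin hcomp
end PaperBC
end
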